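/- Let R be a reduced irreducible root system with Λ = 2 (or simply laced), highest root θ, L = ht_l(θ), S = ht_s(θ). The positive short roots α with (α, θ∨) > 0 are exactly S in number, and for each m = 1,…,S there is a unique positive short root β_m with (β_m, θ∨) > 0 and ht(β_m) = (L−1)/2 + m. -/

import Mathlib

/-!
Let `T` be the set of positive short roots `α` with `(α, θ) > 0`. Each `α ∈ T` has `(α, θ) = a`,
and the other positive short roots are orthogonal to `θ`, so `a·|T|` is the sum of `(x, θ)` over
all positive short roots `x`. Expanding `θ` in simple roots, the same sum is `a·S`: a simple
reflection `s_γ` permutes the positive short roots other than `γ` and negates `(·, γ)`.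

Two distinct `α, β ∈ T` differ by a root (if `(α, β) = 0` then `α + β = θ` and `β - α = s_α θ`),
so the height is injective on `T`. When `ht α < ht β`, the positive root `β - α` is orthogonal
to `θ`, and a simple root `γ ⊥ θ` with `(β - α, γ) > 0` moves `β` down or `α` up by one inside
`T`; so the heights fill an interval. Since `α ↦ θ - α` preserves `T`, the interval is symmetric
about `ht θ / 2 = (L + S) / 2`, and having `S` elements it is `(L + 1) / 2, …, (L - 1) / 2 + S`.
-/

open scoped RealInnerProductSpace Classical

noncomputable section

variable {E : Type*} [NormedAddCommGroup E] [InnerProductSpace ℝ E]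

/-- A reduced irreducible root system in a Euclidean space. -/
structure RRS (E : Type*) [NormedAddCommGroup E] [InnerProductSpace ℝ E] : Type _ where
  roots : Finset E
  nonempty : roots.Nonempty
  span_eq : Submodule.span ℝ (roots : Set E) = ⊤
  ne_zero : ∀ α ∈ roots, α ≠ 0
  reflect_mem : ∀ α ∈ roots, ∀ β ∈ roots, β - (2 * ⟪β, α⟫ / ⟪α, α⟫) • α ∈ roots
  pairing_int : ∀ α ∈ roots, ∀ β ∈ roots, ∃ n : ℤ, 2 * ⟪β, α⟫ / ⟪α, α⟫ = (n : ℝ)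
  reduced : ∀ α ∈ roots, ∀ c : ℝ, c • α ∈ roots → c = 1 ∨ c = -1
  irreducible : ∀ s : Finset E, s ⊆ roots → s.Nonempty →
      (∀ α ∈ s, ∀ β ∈ roots, β ∉ s → ⟪α, β⟫ = 0) → s = roots

/-- The Cartan pairing `⟨β, α∨⟩ = 2(β,α)/(α,α)`. -/
def pairR (β α : E) : ℝ := 2 * ⟪β, α⟫ / ⟪α, α⟫

/-- The orthogonal reflection in (the hyperplane orthogonal to) `α`. -/
def reflMap (α x : E) : E := x - pairR x α • α

/-- `Δ` is a base of simple roots, with `coeff α γ` the coordinates of roots. -/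
def IsBase (R : RRS E) (Δ : Finset E) (coeff : E → E → ℤ) : Prop :=
  Δ ⊆ R.roots ∧ LinearIndependent ℝ (fun γ : (Δ : Set E) => (γ : E)) ∧
    (∀ α ∈ R.roots, α = ∑ γ ∈ Δ, (coeff α γ : ℝ) • γ) ∧
    (∀ α ∈ R.roots, (∀ γ ∈ Δ, 0 ≤ coeff α γ) ∨ (∀ γ ∈ Δ, coeff α γ ≤ 0))

/-- Positivity (all simple-root coordinates nonnegative). -/
def IsPos (Δ : Finset E) (coeff : E → E → ℤ) (α : E) : Prop := ∀ γ ∈ Δ, 0 ≤ coeff α γ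

/-- Height: the sum of the simple-root coordinates. -/
def htZ (Δ : Finset E) (coeff : E → E → ℤ) (α : E) : ℤ := ∑ γ ∈ Δ, coeff α γ

/-- Partial height: the sum of coordinates over simple roots satisfying `P`. -/
def htP (Δ : Finset E) (coeff : E → E → ℤ) (P : E → Prop) (α : E) : ℤ :=
  ∑ γ ∈ Δ.filter P, coeff α γ

/-- The result of applying the word of reflections `s_{γ_p} ⋯ s_{γ_1}` to `x`,
where `l = [γ_1, …, γ_p]`. -/
def wordMap (l : List E) (x : E) : E := l.foldl (fun y γ => reflMap γ y) x

/-- The chain of roots `α^(i) = s_{γ_1} ⋯ s_{γ_{i-1}} γ_i` (0-based `i`). -/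
def chainRoot (l : List E) (i : ℕ) : E := wordMap ((l.take i).reverse) (l.getD i 0)

open Finset

section Reflection

variable {γ : E}

theorem inner_reflMap_self (γ x : E) : ⟪reflMap γ x, γ⟫ = -⟪x, γ⟫ := by
  by_cases hγ : ⟪γ, γ⟫ = 0
  · simp [inner_self_eq_zero.1 hγ]
  · simp only [reflMap, pairR, inner_sub_left, real_inner_smul_left]
    field_simp
    ring

theorem pairR_reflMap (γ x : E) : pairR (reflMap γ x) γ = -pairR x γ := by
  simp only [pairR, inner_reflMap_self]
  ring

theorem reflMap_reflMap (γ x : E) : reflMap γ (reflMap γ x) = x := by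
  rw [reflMap, pairR_reflMap, reflMap, neg_smul, sub_neg_eq_add, sub_add_cancel]

theorem inner_reflMap_reflMap (γ x : E) : ⟪reflMap γ x, reflMap γ x⟫ = ⟪x, x⟫ := by
  by_cases hγ : ⟪γ, γ⟫ = 0
  · simp [reflMap, inner_self_eq_zero.1 hγ]
  · simp only [reflMap, pairR, inner_sub_left, inner_sub_right, real_inner_smul_left,
      real_inner_smul_right, real_inner_comm x γ]
    field_simp
    ring

theorem reflMap_self (hγ : γ ≠ 0) : reflMap γ γ = -γ := by
  have : ⟪γ, γ⟫ ≠ 0 := inner_self_ne_zero.2 hγ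
  rw [reflMap, pairR, mul_div_assoc, div_self this, mul_one, two_smul, sub_add_cancel_left]

/-- `s_γ` permutes `P` and negates `(·, γ)`. -/
theorem sum_inner_eq_zero_of_reflMap_mem {P : Finset E} (hP : ∀ x ∈ P, reflMap γ x ∈ P) :
    ∑ x ∈ P, ⟪x, γ⟫ = 0 := by
  have h : ∑ x ∈ P, ⟪x, γ⟫ = ∑ x ∈ P, ⟪reflMap γ x, γ⟫ :=
    sum_nbij' (reflMap γ) (reflMap γ) hP hP (fun x _ => reflMap_reflMap γ x)
      (fun x _ => reflMap_reflMap γ x) (fun x _ => by rw [reflMap_reflMap])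
  simp only [inner_reflMap_self, sum_neg_distrib] at h
  linarith

end Reflection

theorem Int.ordConnected_of_forall_lt {s : Set ℤ}
    (h : ∀ i ∈ s, ∀ j ∈ s, i < j → i + 1 ∈ s ∨ j - 1 ∈ s) : s.OrdConnected := by
  suffices key : ∀ n : ℕ, ∀ i ∈ s, ∀ j ∈ s, j - i ≤ n → Set.Icc i j ⊆ s from
    ⟨fun i hi j hj => key (j - i).toNat i hi j hj (Int.self_le_toNat _)⟩
  intro n
  induction n with
  | zero =>
    intro i hi j hj hn k hk
    obtain rfl : k = i := by grind
    exact hi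
  | succ n ih =>
    intro i hi j hj hn k ⟨hik, hkj⟩
    rcases eq_or_lt_of_le hik with rfl | hik
    · exact hi
    rcases h i hi j hj (hik.trans_le hkj) with hi' | hj'
    · exact ih (i + 1) hi' j hj (by omega) ⟨by omega, hkj⟩
    · rcases eq_or_lt_of_le hkj with rfl | hkj
      · exact hj
      · exact ih i hi (j - 1) hj' (by omega) ⟨hik.le, by omega⟩

theorem Finset.exists_mem_two_mul_eq_of_ordConnected {s : Finset ℤ}
    (hs : (s : Set ℤ).OrdConnected) {H : ℤ} (hsymm : ∀ i ∈ s, H - i ∈ s) {m : ℤ}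
    (hm₁ : 1 ≤ m) (hm₂ : m ≤ #s) : ∃ k ∈ s, 2 * k = H - #s - 1 + 2 * m := by
  have hne : s.Nonempty := card_pos.1 (by omega)
  obtain ⟨lo, hi, rfl⟩ : ∃ lo hi, s = Icc lo hi := by
    refine ⟨s.min' hne, s.max' hne, ext fun k => ⟨fun hk => ?_, fun hk => ?_⟩⟩
    · exact mem_Icc.2 ⟨min'_le s k hk, le_max' s k hk⟩
    · exact hs.out (min'_mem s hne) (max'_mem s hne) (by simpa using hk)
  simp only [mem_Icc, Int.card_Icc] at hsymm hm₂ ⊢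
  have hlo := hsymm lo (by omega)
  have hhi := hsymm hi (by omega)
  exact ⟨lo + m - 1, by omega, by omega⟩

namespace RRS

variable (R : RRS E) {x y : E}

theorem inner_self_pos (hx : x ∈ R.roots) : 0 < ⟪x, x⟫ :=
  real_inner_self_pos.2 (R.ne_zero x hx)

theorem reflMap_mem (hy : y ∈ R.roots) (hx : x ∈ R.roots) : reflMap y x ∈ R.roots :=
  R.reflect_mem y hy x hx

theorem neg_mem (hx : x ∈ R.roots) : -x ∈ R.roots :=
  reflMap_self (R.ne_zero x hx) ▸ R.reflMap_mem hx hx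

/-- Strict Cauchy–Schwarz (reducedness rules out `x ∥ y`) gives `⟨x, y∨⟩ < 2‖x‖/‖y‖ ≤ 2`. -/
theorem pairR_eq_one_of_inner_pos (hx : x ∈ R.roots) (hy : y ∈ R.roots) (hxy : 0 < ⟪x, y⟫)
    (hne : x ≠ y) (hle : ⟪x, x⟫ ≤ ⟪y, y⟫) : pairR x y = 1 := by
  obtain ⟨q, hq⟩ := R.pairing_int y hy x hx
  have hyy := R.inner_self_pos hy
  have hcs : ⟪x, y⟫ < ‖x‖ * ‖y‖ := by
    refine inner_lt_norm_mul_iff_real.2 fun h => ?_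
    have hy0 : ‖y‖ ≠ 0 := norm_ne_zero_iff.2 (R.ne_zero y hy)
    have hxy' : x = (‖x‖ / ‖y‖) • y := by
      rw [div_eq_inv_mul, mul_smul, ← h, smul_smul, inv_mul_cancel₀ hy0, one_smul]
    rcases R.reduced y hy _ (hxy' ▸ hx) with h1 | h1
    · exact hne (by rw [hxy', h1, one_smul])
    · linarith [div_nonneg (norm_nonneg x) (norm_nonneg y)]
  have hnorm : ‖x‖ ≤ ‖y‖ := by
    rw [real_inner_self_eq_norm_sq, real_inner_self_eq_norm_sq] at hle
    exact (pow_le_pow_iff_left₀ (norm_nonneg x) (norm_nonneg y) two_ne_zero).1 hle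
  have hq' : (q : ℝ) * ‖y‖ ^ 2 = 2 * ⟪x, y⟫ := by
    rw [← hq, ← real_inner_self_eq_norm_sq]
    field_simp
  have hq0 : (0 : ℝ) < q := by nlinarith
  have hq2 : (q : ℝ) < 2 := by nlinarith [norm_nonneg x]
  have : q = 1 := by
    have := Int.cast_pos.1 hq0
    have : q < 2 := by exact_mod_cast hq2
    omega
  rw [pairR, hq, this, Int.cast_one]

theorem reflMap_eq_sub_of_inner_pos (hx : x ∈ R.roots) (hy : y ∈ R.roots) (hxy : 0 < ⟪x, y⟫)
    (hne : x ≠ y) (hle : ⟪x, x⟫ ≤ ⟪y, y⟫) : reflMap y x = x - y := by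
  rw [reflMap, R.pairR_eq_one_of_inner_pos hx hy hxy hne hle, one_smul]

theorem sub_mem_of_inner_pos (hx : x ∈ R.roots) (hy : y ∈ R.roots) (hxy : 0 < ⟪x, y⟫)
    (hne : x ≠ y) : x - y ∈ R.roots := by
  rcases le_total ⟪x, x⟫ ⟪y, y⟫ with hle | hle
  · exact R.reflMap_eq_sub_of_inner_pos hx hy hxy hne hle ▸ R.reflMap_mem hy hx
  · have h := R.reflMap_eq_sub_of_inner_pos hy hx (by rwa [real_inner_comm]) hne.symm hle
    rw [← neg_sub]
    exact R.neg_mem (h ▸ R.reflMap_mem hx hy)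

end RRS

namespace IsBase

variable {R : RRS E} {Δ : Finset E} {coeff : E → E → ℤ} {x y γ : E}

theorem mem_roots (hB : IsBase R Δ coeff) (hγ : γ ∈ Δ) : γ ∈ R.roots := hB.1 hγ

theorem eq_sum (hB : IsBase R Δ coeff) (hx : x ∈ R.roots) :
    x = ∑ γ ∈ Δ, (coeff x γ : ℝ) • γ :=
  hB.2.2.1 x hx

theorem coeff_eq_of_eq_sum (hB : IsBase R Δ coeff) (hx : x ∈ R.roots) (f : E → ℝ)
    (h : x = ∑ γ ∈ Δ, f γ • γ) : ∀ γ ∈ Δ, (coeff x γ : ℝ) = f γ := by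
  intro γ hγ
  refine sub_eq_zero.1 ((linearIndepOn_finset_iff (v := id)).1 hB.2.1
    (fun γ => (coeff x γ : ℝ) - f γ) ?_ γ hγ)
  simp only [id, sub_smul, sum_sub_distrib, ← hB.eq_sum hx, ← h, sub_self]

theorem coeff_add (hB : IsBase R Δ coeff) (hx : x ∈ R.roots) (hy : y ∈ R.roots)
    (hxy : x + y ∈ R.roots) : ∀ γ ∈ Δ, coeff (x + y) γ = coeff x γ + coeff y γ := by
  intro γ hγ
  exact_mod_cast hB.coeff_eq_of_eq_sum hxy (fun γ => (coeff x γ : ℝ) + coeff y γ)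
    (by simp only [add_smul, sum_add_distrib, ← hB.eq_sum hx, ← hB.eq_sum hy]) γ hγ

theorem coeff_sub (hB : IsBase R Δ coeff) (hx : x ∈ R.roots) (hy : y ∈ R.roots)
    (hxy : x - y ∈ R.roots) : ∀ γ ∈ Δ, coeff (x - y) γ = coeff x γ - coeff y γ := by
  intro γ hγ
  exact_mod_cast hB.coeff_eq_of_eq_sum hxy (fun γ => (coeff x γ : ℝ) - coeff y γ)
    (by simp only [sub_smul, sum_sub_distrib, ← hB.eq_sum hx, ← hB.eq_sum hy]) γ hγ

theorem coeff_neg (hB : IsBase R Δ coeff) (hx : x ∈ R.roots) :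
    ∀ γ ∈ Δ, coeff (-x) γ = -coeff x γ := by
  intro γ hγ
  exact_mod_cast hB.coeff_eq_of_eq_sum (R.neg_mem hx) (fun γ => -(coeff x γ : ℝ))
    (by simp only [neg_smul, sum_neg_distrib, ← hB.eq_sum hx]) γ hγ

theorem coeff_simple (hB : IsBase R Δ coeff) (hγ : γ ∈ Δ) :
    ∀ γ' ∈ Δ, coeff γ γ' = if γ' = γ then 1 else 0 := by
  intro γ' hγ'
  have := hB.coeff_eq_of_eq_sum (hB.mem_roots hγ) (fun γ' => if γ' = γ then 1 else 0)
    (by simp [ite_smul, hγ]) γ' hγ'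
  split_ifs at this ⊢ <;> exact_mod_cast this

theorem coeff_reflMap_simple_of_ne (hB : IsBase R Δ coeff) (hγ : γ ∈ Δ) (hx : x ∈ R.roots)
    {γ' : E} (hγ' : γ' ∈ Δ) (hne : γ' ≠ γ) : coeff (reflMap γ x) γ' = coeff x γ' := by
  have := hB.coeff_eq_of_eq_sum (R.reflMap_mem (hB.mem_roots hγ) hx)
    (fun δ => coeff x δ - if δ = γ then pairR x γ else 0)
    (by simp [reflMap, sub_smul, sum_sub_distrib, ite_smul, hγ, ← hB.eq_sum hx]) γ' hγ'
  simp only [hne, if_false, sub_zero] at this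
  exact_mod_cast this

theorem isPos_of_coeff_pos (hB : IsBase R Δ coeff) (hx : x ∈ R.roots) (hγ : γ ∈ Δ)
    (hpos : 0 < coeff x γ) : IsPos Δ coeff x :=
  (hB.2.2.2 x hx).resolve_right fun hn => (hn γ hγ).not_gt hpos

/-- The only positive multiple of `γ` that is a root is `γ` itself. -/
theorem exists_coeff_pos_of_ne (hB : IsBase R Δ coeff) (hγ : γ ∈ Δ) (hx : x ∈ R.roots)
    (hp : IsPos Δ coeff x) (hne : x ≠ γ) : ∃ γ' ∈ Δ, γ' ≠ γ ∧ 0 < coeff x γ' := by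
  by_contra! h
  have hxγ : x = (coeff x γ : ℝ) • γ := by
    conv_lhs => rw [hB.eq_sum hx]
    refine sum_eq_single_of_mem γ hγ fun γ' hγ' hne' => ?_
    rw [le_antisymm (h γ' hγ' hne') (hp γ' hγ'), Int.cast_zero, zero_smul]
  rcases R.reduced γ (hB.mem_roots hγ) _ (hxγ ▸ hx) with h1 | h1
  · exact hne (by rw [hxγ, h1, one_smul])
  · have : (0 : ℝ) ≤ coeff x γ := by exact_mod_cast hp γ hγ
    linarith

theorem isPos_reflMap_simple (hB : IsBase R Δ coeff) (hγ : γ ∈ Δ) (hx : x ∈ R.roots)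
    (hp : IsPos Δ coeff x) (hne : x ≠ γ) : IsPos Δ coeff (reflMap γ x) := by
  obtain ⟨γ', hγ', hγ'γ, hpos⟩ := hB.exists_coeff_pos_of_ne hγ hx hp hne
  refine hB.isPos_of_coeff_pos (R.reflMap_mem (hB.mem_roots hγ) hx) hγ' ?_
  rwa [hB.coeff_reflMap_simple_of_ne hγ hx hγ' hγ'γ]

theorem htZ_add (hB : IsBase R Δ coeff) (hx : x ∈ R.roots) (hy : y ∈ R.roots)
    (hxy : x + y ∈ R.roots) : htZ Δ coeff (x + y) = htZ Δ coeff x + htZ Δ coeff y := by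
  rw [htZ, sum_congr rfl (hB.coeff_add hx hy hxy), sum_add_distrib, htZ, htZ]

theorem htZ_sub (hB : IsBase R Δ coeff) (hx : x ∈ R.roots) (hy : y ∈ R.roots)
    (hxy : x - y ∈ R.roots) : htZ Δ coeff (x - y) = htZ Δ coeff x - htZ Δ coeff y := by
  rw [htZ, sum_congr rfl (hB.coeff_sub hx hy hxy), sum_sub_distrib, htZ, htZ]

theorem htZ_neg (hB : IsBase R Δ coeff) (hx : x ∈ R.roots) :
    htZ Δ coeff (-x) = -htZ Δ coeff x := by
  rw [htZ, sum_congr rfl (hB.coeff_neg hx), sum_neg_distrib, htZ]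

theorem htZ_simple (hB : IsBase R Δ coeff) (hγ : γ ∈ Δ) : htZ Δ coeff γ = 1 := by
  rw [htZ, sum_congr rfl (hB.coeff_simple hγ), sum_ite_eq' Δ γ, if_pos hγ]

theorem htZ_pos_of_isPos (hB : IsBase R Δ coeff) (hx : x ∈ R.roots) (hp : IsPos Δ coeff x) :
    0 < htZ Δ coeff x := by
  obtain ⟨γ, hγ, hne⟩ : ∃ γ ∈ Δ, coeff x γ ≠ 0 := by
    by_contra! h
    refine R.ne_zero x hx ?_
    rw [hB.eq_sum hx]
    exact sum_eq_zero fun γ hγ => by rw [h γ hγ, Int.cast_zero, zero_smul]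
  exact sum_pos' hp ⟨γ, hγ, (hp γ hγ).lt_of_ne' hne⟩

theorem isPos_iff_htZ_pos (hB : IsBase R Δ coeff) (hx : x ∈ R.roots) :
    IsPos Δ coeff x ↔ 0 < htZ Δ coeff x :=
  ⟨hB.htZ_pos_of_isPos hx, fun h =>
    (hB.2.2.2 x hx).resolve_right fun hn => (sum_nonpos hn).not_gt h⟩

theorem isPos_simple (hB : IsBase R Δ coeff) (hγ : γ ∈ Δ) : IsPos Δ coeff γ :=
  (hB.isPos_iff_htZ_pos (hB.mem_roots hγ)).2 (by rw [hB.htZ_simple hγ]; exact one_pos)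

theorem isPos_neg_of_not_isPos (hB : IsBase R Δ coeff) (hx : x ∈ R.roots)
    (hp : ¬IsPos Δ coeff x) : IsPos Δ coeff (-x) := fun γ hγ => by
  rw [hB.coeff_neg hx γ hγ]
  exact neg_nonneg.2 ((hB.2.2.2 x hx).resolve_left hp γ hγ)

theorem htZ_ne_zero (hB : IsBase R Δ coeff) (hx : x ∈ R.roots) : htZ Δ coeff x ≠ 0 := by
  by_cases hp : IsPos Δ coeff x
  · exact (hB.htZ_pos_of_isPos hx hp).ne'
  · have := hB.htZ_pos_of_isPos (R.neg_mem hx) (hB.isPos_neg_of_not_isPos hx hp)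
    rw [hB.htZ_neg hx] at this
    omega

theorem inner_eq_sum (hB : IsBase R Δ coeff) (hx : x ∈ R.roots) (v : E) :
    ⟪v, x⟫ = ∑ γ ∈ Δ, (coeff x γ : ℝ) * ⟪v, γ⟫ := by
  conv_lhs => rw [hB.eq_sum hx]
  simp only [inner_sum, real_inner_smul_right]

end IsBase

def posShortRoots (R : RRS E) (Δ : Finset E) (coeff : E → E → ℤ) (a : ℝ) : Finset E :=
  R.roots.filter fun α => IsPos Δ coeff α ∧ ⟪α, α⟫ = a

namespace IsBase

variable {R : RRS E} {Δ : Finset E} {coeff : E → E → ℤ} {a : ℝ} {x y γ : E}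

theorem reflMap_mem_posShortRoots_erase (hB : IsBase R Δ coeff) (hγ : γ ∈ Δ) :
    ∀ x ∈ (posShortRoots R Δ coeff a).erase γ,
      reflMap γ x ∈ (posShortRoots R Δ coeff a).erase γ := by
  intro x hx
  simp only [posShortRoots, mem_erase, mem_filter] at hx ⊢
  obtain ⟨hne, hx, hp, hs⟩ := hx
  have hγr := hB.mem_roots hγ
  refine ⟨fun h => ?_, R.reflMap_mem hγr hx, hB.isPos_reflMap_simple hγ hx hp hne,
    by rw [inner_reflMap_reflMap, hs]⟩
  have hxγ : x = -γ := by rw [← reflMap_reflMap γ x, h, reflMap_self (R.ne_zero γ hγr)]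
  have := hB.htZ_pos_of_isPos hx hp
  rw [hxγ, hB.htZ_neg hγr, hB.htZ_simple hγ] at this
  omega

theorem sum_inner_simple_posShortRoots (hB : IsBase R Δ coeff) (hγ : γ ∈ Δ) :
    ∑ x ∈ posShortRoots R Δ coeff a, ⟪x, γ⟫ = if ⟪γ, γ⟫ = a then a else 0 := by
  have hzero := sum_inner_eq_zero_of_reflMap_mem (hB.reflMap_mem_posShortRoots_erase (a := a) hγ)
  by_cases hmem : γ ∈ posShortRoots R Δ coeff a
  · have hs : ⟪γ, γ⟫ = a := (mem_filter.1 hmem).2.2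
    rw [← sum_erase_add _ _ hmem, hzero, zero_add, if_pos hs, hs]
  · rw [erase_eq_of_notMem hmem] at hzero
    rw [hzero, if_neg fun hs => hmem (mem_filter.2 ⟨hB.mem_roots hγ, hB.isPos_simple hγ, hs⟩)]

theorem sum_inner_posShortRoots (hB : IsBase R Δ coeff) (hy : y ∈ R.roots) :
    ∑ x ∈ posShortRoots R Δ coeff a, ⟪x, y⟫ = a * htP Δ coeff (fun γ => ⟪γ, γ⟫ = a) y := by
  calc ∑ x ∈ posShortRoots R Δ coeff a, ⟪x, y⟫
      = ∑ x ∈ posShortRoots R Δ coeff a, ∑ γ ∈ Δ, (coeff y γ : ℝ) * ⟪x, γ⟫ :=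
        sum_congr rfl fun x _ => hB.inner_eq_sum hy x
    _ = ∑ γ ∈ Δ, (coeff y γ : ℝ) * ∑ x ∈ posShortRoots R Δ coeff a, ⟪x, γ⟫ := by
        rw [sum_comm]
        simp_rw [mul_sum]
    _ = ∑ γ ∈ Δ, (coeff y γ : ℝ) * if ⟪γ, γ⟫ = a then a else 0 :=
        sum_congr rfl fun γ hγ => by rw [hB.sum_inner_simple_posShortRoots hγ]
    _ = a * htP Δ coeff (fun γ => ⟪γ, γ⟫ = a) y := by
        simp [htP, sum_filter, mul_sum, mul_comm]

end IsBase

structure IsHighestRoot (R : RRS E) (Δ : Finset E) (coeff : E → E → ℤ) (θ : E) : Prop where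
  mem : θ ∈ R.roots
  coeff_le : ∀ α ∈ R.roots, ∀ γ ∈ Δ, coeff α γ ≤ coeff θ γ

namespace IsHighestRoot

variable {R : RRS E} {Δ : Finset E} {coeff : E → E → ℤ} {θ x : E}

theorem htZ_le (hθ : IsHighestRoot R Δ coeff θ) (hx : x ∈ R.roots) :
    htZ Δ coeff x ≤ htZ Δ coeff θ :=
  sum_le_sum (hθ.coeff_le x hx)

/-- If `(x, θ) < 0` then `x + θ` would be a root above `θ`. -/
theorem inner_nonneg (hθ : IsHighestRoot R Δ coeff θ) (hB : IsBase R Δ coeff)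
    (hx : x ∈ R.roots) (hp : IsPos Δ coeff x) : 0 ≤ ⟪x, θ⟫ := by
  by_contra! hneg
  have hht := hB.htZ_pos_of_isPos hx hp
  have hne : -x ≠ θ := by
    rintro rfl
    have := hθ.htZ_le hx
    rw [hB.htZ_neg hx] at this
    omega
  have hsum : x + θ ∈ R.roots := by
    have := R.neg_mem <|
      R.sub_mem_of_inner_pos (R.neg_mem hx) hθ.mem (by rw [inner_neg_left]; linarith) hne
    rwa [neg_sub, sub_neg_eq_add, add_comm] at this
  have := hθ.htZ_le hsum
  rw [hB.htZ_add hx hθ.mem hsum] at this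
  omega

theorem isPos_of_inner_pos (hθ : IsHighestRoot R Δ coeff θ) (hB : IsBase R Δ coeff)
    (hx : x ∈ R.roots) (hpos : 0 < ⟪x, θ⟫) : IsPos Δ coeff x := by
  by_contra hp
  have := hθ.inner_nonneg hB (R.neg_mem hx) (hB.isPos_neg_of_not_isPos hx hp)
  rw [inner_neg_left] at this
  linarith

/-- Expanding `(x, x) > 0` and `(θ, x) = 0` in simple roots: some `γ` with positive coefficient
has `(x, γ) > 0`, while every such `γ` is orthogonal to `θ` because `(γ, θ) ≥ 0`. -/
theorem exists_simple_inner_pos (hθ : IsHighestRoot R Δ coeff θ) (hB : IsBase R Δ coeff)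
    (hx : x ∈ R.roots) (hp : IsPos Δ coeff x) (hperp : ⟪x, θ⟫ = 0) :
    ∃ γ ∈ Δ, 0 < ⟪x, γ⟫ ∧ ⟪γ, θ⟫ = 0 := by
  have hc : ∀ γ ∈ Δ, (0 : ℝ) ≤ coeff x γ := fun γ hγ => by exact_mod_cast hp γ hγ
  have hzero : ∀ γ ∈ Δ, (coeff x γ : ℝ) * ⟪θ, γ⟫ = 0 := by
    refine (sum_eq_zero_iff_of_nonneg fun γ hγ => mul_nonneg (hc γ hγ) ?_).1 ?_
    · rw [real_inner_comm]
      exact hθ.inner_nonneg hB (hB.mem_roots hγ) (hB.isPos_simple hγ)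
    · rw [← hB.inner_eq_sum hx, real_inner_comm, hperp]
  obtain ⟨γ, hγ, hpos⟩ : ∃ γ ∈ Δ, 0 < (coeff x γ : ℝ) * ⟪x, γ⟫ := by
    by_contra! hle
    have := sum_nonpos hle
    rw [← hB.inner_eq_sum hx] at this
    linarith [R.inner_self_pos hx]
  have hcγ : (coeff x γ : ℝ) ≠ 0 := fun h0 => by rw [h0, zero_mul] at hpos; exact hpos.false
  refine ⟨γ, hγ, pos_of_mul_pos_right hpos (hc γ hγ), ?_⟩
  rw [real_inner_comm]
  exact (mul_eq_zero.1 (hzero γ hγ)).resolve_left hcγ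

end IsHighestRoot

structure IsLongHighestRoot (R : RRS E) (Δ : Finset E) (coeff : E → E → ℤ) (a : ℝ) (θ : E) :
    Prop extends IsHighestRoot R Δ coeff θ where
  isBase : IsBase R Δ coeff
  pos : 0 < a
  inner_self_roots : ∀ α ∈ R.roots, ⟪α, α⟫ = a ∨ ⟪α, α⟫ = 2 * a
  inner_self : ⟪θ, θ⟫ = 2 * a

def thetaShortRoots (R : RRS E) (Δ : Finset E) (coeff : E → E → ℤ) (a : ℝ) (θ : E) :
    Finset E :=
  R.roots.filter fun α => IsPos Δ coeff α ∧ ⟪α, α⟫ = a ∧ 0 < ⟪α, θ⟫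

namespace IsLongHighestRoot

variable {R : RRS E} {Δ : Finset E} {coeff : E → E → ℤ} {a : ℝ} {θ x y α β : E}

theorem le_inner_self (h : IsLongHighestRoot R Δ coeff a θ) (hx : x ∈ R.roots) :
    a ≤ ⟪x, x⟫ := by
  rcases h.inner_self_roots x hx with hx | hx <;> linarith [h.pos]

theorem inner_eq_of_inner_pos (h : IsLongHighestRoot R Δ coeff a θ) (hx : x ∈ R.roots)
    (hs : ⟪x, x⟫ = a) (hpos : 0 < ⟪x, θ⟫) : ⟪x, θ⟫ = a := by
  have hne : x ≠ θ := by rintro rfl; linarith [h.inner_self, h.pos]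
  have := R.pairR_eq_one_of_inner_pos hx h.mem hpos hne (by rw [hs, h.inner_self]; linarith [h.pos])
  rw [pairR, h.inner_self, div_eq_one_iff_eq (by linarith [h.pos])] at this
  linarith

theorem mem_thetaShortRoots (h : IsLongHighestRoot R Δ coeff a θ) (hx : x ∈ R.roots)
    (hs : ⟪x, x⟫ = a) (hpos : 0 < ⟪x, θ⟫) : x ∈ thetaShortRoots R Δ coeff a θ :=
  mem_filter.2 ⟨hx, h.isPos_of_inner_pos h.isBase hx hpos, hs, hpos⟩

theorem inner_eq_of_mem (h : IsLongHighestRoot R Δ coeff a θ)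
    (hα : α ∈ thetaShortRoots R Δ coeff a θ) : ⟪α, θ⟫ = a :=
  have ⟨hα, _, hs, hpos⟩ := mem_filter.1 hα
  h.inner_eq_of_inner_pos hα hs hpos

theorem sub_mem_of_inner_pos (h : IsLongHighestRoot R Δ coeff a θ)
    (hα : α ∈ thetaShortRoots R Δ coeff a θ) (hy : y ∈ R.roots) (hyθ : ⟪y, θ⟫ = 0)
    (hαy : 0 < ⟪α, y⟫) : α - y ∈ thetaShortRoots R Δ coeff a θ := by
  obtain ⟨hα, -, hs, hpos⟩ := mem_filter.1 hα
  have hne : α ≠ y := by rintro rfl; linarith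
  have hrefl := R.reflMap_eq_sub_of_inner_pos hα hy hαy hne (hs ▸ h.le_inner_self hy)
  refine h.mem_thetaShortRoots (hrefl ▸ R.reflMap_mem hy hα)
    (by rw [← hrefl, inner_reflMap_reflMap, hs]) ?_
  rwa [inner_sub_left, hyθ, sub_zero]

theorem theta_sub_mem (h : IsLongHighestRoot R Δ coeff a θ)
    (hα : α ∈ thetaShortRoots R Δ coeff a θ) : θ - α ∈ thetaShortRoots R Δ coeff a θ := by
  have hαθ := h.inner_eq_of_mem hα
  obtain ⟨hα, -, hs, -⟩ := mem_filter.1 hα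
  have hne : θ ≠ α := by rintro rfl; linarith [h.inner_self, h.pos]
  refine h.mem_thetaShortRoots
    (R.sub_mem_of_inner_pos h.mem hα (by rw [real_inner_comm, hαθ]; exact h.pos) hne) ?_ ?_
  · simp only [inner_sub_left, inner_sub_right, real_inner_comm α θ, hαθ, hs, h.inner_self]
    ring
  · rw [inner_sub_left, h.inner_self, hαθ]
    linarith [h.pos]

/-- `‖α + β - θ‖² = 2 (α, β)`. -/
theorem inner_pos_or_add_eq (h : IsLongHighestRoot R Δ coeff a θ)
    (hα : α ∈ thetaShortRoots R Δ coeff a θ) (hβ : β ∈ thetaShortRoots R Δ coeff a θ) :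
    0 < ⟪α, β⟫ ∨ α + β = θ := by
  have hαθ := h.inner_eq_of_mem hα
  have hβθ := h.inner_eq_of_mem hβ
  have hαα := (mem_filter.1 hα).2.2.1
  have hββ := (mem_filter.1 hβ).2.2.1
  have hnorm : ⟪α + β - θ, α + β - θ⟫ = 2 * ⟪α, β⟫ := by
    simp only [inner_sub_left, inner_sub_right, inner_add_left, inner_add_right,
      real_inner_comm α β, real_inner_comm α θ, real_inner_comm β θ, hαθ, hβθ, hαα, hββ,
      h.inner_self]
    ring
  rcases (real_inner_self_nonneg (x := α + β - θ)).lt_or_eq with hlt | heq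
  · exact Or.inl (by linarith)
  · exact Or.inr (sub_eq_zero.1 (inner_self_eq_zero.1 heq.symm))

theorem sub_mem_roots_of_ne (h : IsLongHighestRoot R Δ coeff a θ)
    (hα : α ∈ thetaShortRoots R Δ coeff a θ) (hβ : β ∈ thetaShortRoots R Δ coeff a θ)
    (hne : α ≠ β) : β - α ∈ R.roots := by
  rcases h.inner_pos_or_add_eq hα hβ with hpos | hsum
  · exact R.sub_mem_of_inner_pos (mem_filter.1 hβ).1 (mem_filter.1 hα).1
      (by rwa [real_inner_comm]) hne.symm
  · have hpair : pairR θ α = 2 := by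
      rw [pairR, real_inner_comm, h.inner_eq_of_mem hα, (mem_filter.1 hα).2.2.1]
      field_simp [h.pos.ne']
    have hrefl : reflMap α θ = β - α := by
      rw [reflMap, hpair, ← hsum, two_smul]
      abel
    exact hrefl ▸ R.reflMap_mem (mem_filter.1 hα).1 h.mem

theorem htZ_injOn (h : IsLongHighestRoot R Δ coeff a θ) :
    Set.InjOn (htZ Δ coeff) (thetaShortRoots R Δ coeff a θ) := by
  intro α hα β hβ hht
  by_contra hne
  have hroot := h.sub_mem_roots_of_ne hα hβ hne
  have := h.isBase.htZ_sub (mem_filter.1 hβ).1 (mem_filter.1 hα).1 hroot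
  exact h.isBase.htZ_ne_zero hroot (by omega)

theorem htZ_add_one_mem_or_sub_one_mem (h : IsLongHighestRoot R Δ coeff a θ)
    (hα : α ∈ thetaShortRoots R Δ coeff a θ) (hβ : β ∈ thetaShortRoots R Δ coeff a θ)
    (hlt : htZ Δ coeff α < htZ Δ coeff β) :
    htZ Δ coeff α + 1 ∈ (thetaShortRoots R Δ coeff a θ).image (htZ Δ coeff) ∨
      htZ Δ coeff β - 1 ∈ (thetaShortRoots R Δ coeff a θ).image (htZ Δ coeff) := by
  have hB := h.isBase
  have hroot := h.sub_mem_roots_of_ne hα hβ (by rintro rfl; exact hlt.false)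
  have hαr := (mem_filter.1 hα).1
  have hβr := (mem_filter.1 hβ).1
  have hp : IsPos Δ coeff (β - α) := by
    rw [hB.isPos_iff_htZ_pos hroot, hB.htZ_sub hβr hαr hroot]
    omega
  obtain ⟨γ, hγ, hγpos, hγθ⟩ := h.exists_simple_inner_pos hB hroot hp
    (by rw [inner_sub_left, h.inner_eq_of_mem hα, h.inner_eq_of_mem hβ, sub_self])
  have hγr := hB.mem_roots hγ
  rw [inner_sub_left] at hγpos
  by_cases hβγ : 0 < ⟪β, γ⟫
  · have hmem := h.sub_mem_of_inner_pos hβ hγr hγθ hβγ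
    refine Or.inr (mem_image.2 ⟨β - γ, hmem, ?_⟩)
    rw [hB.htZ_sub hβr hγr (mem_filter.1 hmem).1, hB.htZ_simple hγ]
  · have hmem := h.sub_mem_of_inner_pos hα (R.neg_mem hγr)
      (by rw [inner_neg_left, hγθ, neg_zero]) (by rw [inner_neg_right]; linarith)
    rw [sub_neg_eq_add] at hmem
    refine Or.inl (mem_image.2 ⟨α + γ, hmem, ?_⟩)
    rw [hB.htZ_add hαr hγr (mem_filter.1 hmem).1, hB.htZ_simple hγ]

theorem card_thetaShortRoots (h : IsLongHighestRoot R Δ coeff a θ) :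
    (#(thetaShortRoots R Δ coeff a θ) : ℤ) = htP Δ coeff (fun γ => ⟪γ, γ⟫ = a) θ := by
  have hterm : ∀ x ∈ posShortRoots R Δ coeff a, ⟪x, θ⟫ = if 0 < ⟪x, θ⟫ then a else 0 := by
    intro x hx
    obtain ⟨hx, hp, hs⟩ := mem_filter.1 hx
    split_ifs with hpos
    · exact h.inner_eq_of_inner_pos hx hs hpos
    · exact le_antisymm (not_lt.1 hpos) (h.inner_nonneg h.isBase hx hp)
  have hfilter : (posShortRoots R Δ coeff a).filter (fun x => 0 < ⟪x, θ⟫) =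
      thetaShortRoots R Δ coeff a θ := by
    simp only [posShortRoots, thetaShortRoots, filter_filter, and_assoc]
  have hsum := h.isBase.sum_inner_posShortRoots (a := a) h.mem
  rw [sum_congr rfl hterm, ← sum_filter, hfilter, sum_const, nsmul_eq_mul, mul_comm] at hsum
  exact_mod_cast mul_left_cancel₀ h.pos.ne' hsum

theorem htZ_eq_htP_add_htP (h : IsLongHighestRoot R Δ coeff a θ) (x : E) :
    htZ Δ coeff x =
      htP Δ coeff (fun γ => ⟪γ, γ⟫ = 2 * a) x + htP Δ coeff (fun γ => ⟪γ, γ⟫ = a) x := by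
  rw [htZ, htP, htP, add_comm, ← sum_filter_add_sum_filter_not Δ (fun γ => ⟪γ, γ⟫ = a)]
  congr 2
  have hne : a ≠ 2 * a := by linarith [h.pos]
  refine filter_congr fun γ hγ => ?_
  rcases h.inner_self_roots γ (h.isBase.mem_roots hγ) with hs | hs <;>
    rw [hs] <;> simp [hne, hne.symm]

end IsLongHighestRoot

/-- with `Λ = 2` (or simply laced), `L = ht_l(θ)`, `S = ht_s(θ)`: the
positive short roots `α` with `(α, θ∨) > 0` are exactly `S` in number, and for each
`m = 1, …, S` there is a unique such root of height `(L−1)/2 + m`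
(stated as `2·ht(β) = (L − 1) + 2m`). -/
theorem stmt10 (R : RRS E) (Δ : Finset E) (coeff : E → E → ℤ) (hB : IsBase R Δ coeff)
    (a : ℝ) (ha : 0 < a)
    (hlen : ∀ α ∈ R.roots, ⟪α, α⟫ = a ∨ ⟪α, α⟫ = 2 * a)
    (θ : E) (hθmem : θ ∈ R.roots)
    (hθhigh : ∀ α ∈ R.roots, ∀ γ ∈ Δ, coeff α γ ≤ coeff θ γ)
    (hθlong : ⟪θ, θ⟫ = 2 * a) :
    (((R.roots.filter (fun α => IsPos Δ coeff α ∧ ⟪α, α⟫ = a ∧ 0 < ⟪α, θ⟫)).card : ℤ)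
        = htP Δ coeff (fun γ => ⟪γ, γ⟫ = a) θ) ∧
    (∀ m : ℤ, 1 ≤ m → m ≤ htP Δ coeff (fun γ => ⟪γ, γ⟫ = a) θ →
      ∃! β : E,
        β ∈ R.roots.filter (fun α => IsPos Δ coeff α ∧ ⟪α, α⟫ = a ∧ 0 < ⟪α, θ⟫) ∧
        2 * htZ Δ coeff β = (htP Δ coeff (fun γ => ⟪γ, γ⟫ = 2 * a) θ - 1) + 2 * m) := by
  have h : IsLongHighestRoot R Δ coeff a θ := ⟨⟨hθmem, hθhigh⟩, hB, ha, hlen, hθlong⟩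
  have hcard := h.card_thetaShortRoots
  refine ⟨hcard, fun m hm₁ hm₂ => ?_⟩
  set T := thetaShortRoots R Δ coeff a θ
  have hinj := h.htZ_injOn
  have hconn : (T.image (htZ Δ coeff) : Set ℤ).OrdConnected := by
    refine Int.ordConnected_of_forall_lt fun i hi j hj hij => ?_
    obtain ⟨α, hα, rfl⟩ := mem_image.1 hi
    obtain ⟨β, hβ, rfl⟩ := mem_image.1 hj
    exact h.htZ_add_one_mem_or_sub_one_mem hα hβ hij
  have hsymm : ∀ i ∈ T.image (htZ Δ coeff), htZ Δ coeff θ - i ∈ T.image (htZ Δ coeff) := by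
    intro i hi
    obtain ⟨α, hα, rfl⟩ := mem_image.1 hi
    exact mem_image.2 ⟨θ - α, h.theta_sub_mem hα,
      hB.htZ_sub hθmem (mem_filter.1 hα).1 (mem_filter.1 (h.theta_sub_mem hα)).1⟩
  obtain ⟨k, hk, hk2⟩ := exists_mem_two_mul_eq_of_ordConnected hconn hsymm hm₁
    (by rwa [card_image_of_injOn hinj, hcard])
  obtain ⟨β, hβ, rfl⟩ := mem_image.1 hk
  have hθht := h.htZ_eq_htP_add_htP θ
  rw [card_image_of_injOn hinj, hcard] at hk2
  exact ⟨β, ⟨hβ, by omega⟩, fun β' ⟨hβ', hht⟩ => hinj hβ' hβ (by omega)⟩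

end
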